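/- arXiv:2405.15180 — 4 statements merged into one kernel-verified Lean document; each statement's English description precedes it below -/
import Mathlib

section
/- Under Assumptions 1 and 2, for every i ∈ {1,…,I}, all x, y ∈ Ω, and all {μ}, {ν} ∈ (M₂)^I, one has |exp_q(η^{-1}ΔU_i(x,y,{μ})) − exp_q(η^{-1}ΔU_i(x,y,{ν}))| ≤ 2η^{-1}L · (exp_q(2η^{-1}L))^q · Σ_{j=1}^I ‖μ_j − ν_j‖. -/
open MeasureTheory Real

noncomputable section

/-- The action space `Ω = [0,1]`. -/
abbrev Ω : Type := Set.Icc (0:ℝ) 1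

/-- Tsallis deformed exponential `exp_q`. -/
noncomputable def texp (q z : ℝ) : ℝ :=
  if q = 1 then Real.exp z else (max (1 + (1 - q) * z) 0) ^ ((1:ℝ) / (1 - q))

/-- Total variation norm of a finite signed Borel measure on `Ω`. -/
noncomputable def tv (μ : SignedMeasure Ω) : ℝ := (μ.totalVariation Set.univ).toReal

/-- The density `y ↦ ∫_Ω [ exp_q(η⁻¹ ΔU_i(y,w,{μ})) / ∫_Ω exp_q(η⁻¹ ΔU_i(z,w,{μ})) dz ]^q dw`
of the logit measure `𝔏_i μ`. -/
noncomputable def logitDensity (I : ℕ) (q η : ℝ)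
    (U : Fin I → Ω → (Fin I → SignedMeasure Ω) → ℝ)
    (i : Fin I) (μ : Fin I → SignedMeasure Ω) (y : Ω) : ℝ :=
  ∫ w : Ω, (texp q (η⁻¹ * (U i y μ - U i w μ)) /
      ∫ z : Ω, texp q (η⁻¹ * (U i z μ - U i w μ))) ^ q

/-- The logit measure `𝔏_i μ`, as a signed measure on `Ω`. -/
noncomputable def Logit (I : ℕ) (q η : ℝ)
    (U : Fin I → Ω → (Fin I → SignedMeasure Ω) → ℝ)
    (i : Fin I) (μ : Fin I → SignedMeasure Ω) : SignedMeasure Ω :=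
  (volume : Measure Ω).withDensityᵥ (logitDensity I q η U i μ)

/-- The outflow rate `θ_i(q,η)` (evaluated at `{μ}`). -/
noncomputable def θfun (I : ℕ) (q η : ℝ)
    (U : Fin I → Ω → (Fin I → SignedMeasure Ω) → ℝ)
    (i : Fin I) (μ : Fin I → SignedMeasure Ω) : ℝ :=
  ∫ y : Ω, ∫ w : Ω, (texp q (η⁻¹ * (U i w μ - U i y μ)) /
      ∫ z : Ω, texp q (η⁻¹ * (U i z μ - U i y μ))) ^ q


lemma tv_nonneg (μ : SignedMeasure Ω) : 0 ≤ tv μ := ENNReal.toReal_nonneg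

lemma texp_lip (q a : ℝ) (hq : 0 < q) (ha : 0 ≤ a)
    (hA : q ≠ 1 → 0 < 1 - |1 - q| * a)
    {z₁ z₂ : ℝ} (h1 : |z₁| ≤ a) (h2 : |z₂| ≤ a) :
    |texp q z₁ - texp q z₂| ≤ texp q a ^ q * |z₁ - z₂| := by
  have hz1 : z₁ ∈ Set.Icc (-a) a := abs_le.mp h1
  have hz2 : z₂ ∈ Set.Icc (-a) a := abs_le.mp h2
  by_cases hq1 : q = 1
  · subst hq1
    simp only [texp, if_pos rfl, Real.rpow_one]
    have := (convex_Icc (-a) a).norm_image_sub_le_of_norm_hasDerivWithin_le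
      (f := Real.exp) (f' := Real.exp) (C := Real.exp a)
      (fun z _ => (Real.hasDerivAt_exp z).hasDerivWithinAt)
      (fun z hz => by
        rw [Real.norm_eq_abs, abs_of_pos (Real.exp_pos z)]
        exact Real.exp_le_exp.mpr hz.2)
      hz2 hz1
    simpa [Real.norm_eq_abs] using this
  · set p := 1 - q with hp
    have hp0 : p ≠ 0 := sub_ne_zero.mpr (Ne.symm hq1)
    have hpos : ∀ z ∈ Set.Icc (-a) a, 0 < 1 + p * z := by
      intro z hz
      have h1 : |p * z| ≤ |p| * a := by
        rw [abs_mul]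
        exact mul_le_mul_of_nonneg_left (abs_le.mpr hz) (abs_nonneg p)
      have := hA hq1
      have := neg_abs_le (p * z)
      nlinarith [abs_nonneg (p*z)]
    have heq : ∀ z ∈ Set.Icc (-a) a, texp q z = (1 + p * z) ^ ((1:ℝ)/p) := by
      intro z hz
      simp only [texp, if_neg hq1, ← hp, max_eq_left (hpos z hz).le]
    have hderiv : ∀ z ∈ Set.Icc (-a) a,
        HasDerivWithinAt (fun z => (1 + p * z) ^ ((1:ℝ)/p))
          ((1 + p * z) ^ ((1:ℝ)/p - 1)) (Set.Icc (-a) a) z := by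
      intro z hz
      have hlin : HasDerivAt (fun z : ℝ => 1 + p * z) p z := by
        simpa using ((hasDerivAt_id z).const_mul p).const_add 1
      have := (Real.hasDerivAt_rpow_const (x := 1 + p * z) (p := (1:ℝ)/p)
        (Or.inl (hpos z hz).ne')).comp z hlin
      have harith : (1:ℝ)/p * (1 + p * z) ^ ((1:ℝ)/p - 1) * p
          = (1 + p * z) ^ ((1:ℝ)/p - 1) := by field_simp
      rw [harith] at this
      exact this.hasDerivWithinAt
    have hC : ∀ z ∈ Set.Icc (-a) a,
        ‖(1 + p * z) ^ ((1:ℝ)/p - 1)‖ ≤ texp q a ^ q := by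
      intro z hz
      have haa : a ∈ Set.Icc (-a) a := ⟨by linarith, le_refl a⟩
      rw [heq a haa]
      rw [Real.norm_eq_abs, abs_of_nonneg (Real.rpow_nonneg (hpos z hz).le _)]
      rw [← Real.rpow_mul (hpos a haa).le]
      have hexp : (1:ℝ)/p - 1 = 1/p * q := by
        field_simp
        ring
      rw [hexp]
      rcases lt_or_gt_of_ne hp0 with hplt | hpgt
      · have hbase : 1 + p * a ≤ 1 + p * z := by nlinarith [hz.2]
        exact Real.rpow_le_rpow_of_nonpos (hpos a haa) hbase
          (mul_nonpos_of_nonpos_of_nonneg (one_div_neg.mpr hplt).le hq.le)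
      · have hbase : 1 + p * z ≤ 1 + p * a := by nlinarith [hz.2]
        exact Real.rpow_le_rpow (hpos z hz).le hbase (by positivity)
    have := (convex_Icc (-a) a).norm_image_sub_le_of_norm_hasDerivWithin_le
      hderiv hC hz2 hz1
    rw [heq z₁ hz1, heq z₂ hz2]
    simpa [Real.norm_eq_abs] using this

/-- under Assumptions 1 and 2, for every `i`, all `x, y ∈ Ω`, and all
`{μ}, {ν} ∈ (M₂)^I`,
`|exp_q(η⁻¹ΔU_i(x,y,{μ})) − exp_q(η⁻¹ΔU_i(x,y,{ν}))| ≤ 2η⁻¹L (exp_q(2η⁻¹L))^q Σ_j ‖μ_j − ν_j‖`. -/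
theorem texp_deltaU_lipschitz_in_measures (I : ℕ) (q η L d : ℝ)
    (U : Fin I → Ω → (Fin I → SignedMeasure Ω) → ℝ)
    (hq : 0 < q) (hη : 0 < η) (hL : 0 < L) (hd : d ∈ Set.Ioc (0:ℝ) 1)
    (hU1 : ∀ (i : Fin I) (x : Ω) (μ : Fin I → SignedMeasure Ω),
      (∀ j, tv (μ j) ≤ 2) → |U i x μ| ≤ L)
    (hU2 : ∀ (i : Fin I) (x y : Ω) (μ : Fin I → SignedMeasure Ω),
      (∀ j, tv (μ j) ≤ 2) → |U i x μ - U i y μ| ≤ L * |(x : ℝ) - (y : ℝ)| ^ d)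
    (hU3 : ∀ (i : Fin I) (x : Ω) (μ ν : Fin I → SignedMeasure Ω),
      (∀ j, tv (μ j) ≤ 2) → (∀ j, tv (ν j) ≤ 2) →
      |U i x μ - U i x ν| ≤ L * ∑ j, tv (μ j - ν j))
    (hA2 : q ≠ 1 → ∃ g > 0, 1 - 2 * |1 - q| * η⁻¹ * L ≥ g)
    (i : Fin I) (x y : Ω) (μ ν : Fin I → SignedMeasure Ω)
    (hμ : ∀ j, tv (μ j) ≤ 2) (hν : ∀ j, tv (ν j) ≤ 2) :
    |texp q (η⁻¹ * (U i x μ - U i y μ)) - texp q (η⁻¹ * (U i x ν - U i y ν))| ≤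
      2 * η⁻¹ * L * (texp q (2 * η⁻¹ * L)) ^ q * ∑ j, tv (μ j - ν j) := by
  set S := ∑ j, tv (μ j - ν j) with hS
  have hS0 : 0 ≤ S := Finset.sum_nonneg fun j _ => tv_nonneg _
  have hη' : 0 < η⁻¹ := inv_pos.mpr hη
  set a := 2 * η⁻¹ * L with ha
  have ha0 : 0 ≤ a := by positivity
  have hA : q ≠ 1 → 0 < 1 - |1 - q| * a := by
    intro h
    obtain ⟨g, hg, hge⟩ := hA2 h
    have : |1 - q| * a = 2 * |1 - q| * η⁻¹ * L := by rw [ha]; ring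
    linarith
  have hb1 : |η⁻¹ * (U i x μ - U i y μ)| ≤ a := by
    rw [abs_mul, abs_of_pos hη', ha]
    have := hU1 i x μ hμ
    have := hU1 i y μ hμ
    have habs : |U i x μ - U i y μ| ≤ 2 * L := by
      calc |U i x μ - U i y μ| ≤ |U i x μ| + |U i y μ| := abs_sub _ _
        _ ≤ 2 * L := by linarith
    nlinarith
  have hb2 : |η⁻¹ * (U i x ν - U i y ν)| ≤ a := by
    rw [abs_mul, abs_of_pos hη', ha]
    have := hU1 i x ν hν
    have := hU1 i y ν hν
    have habs : |U i x ν - U i y ν| ≤ 2 * L := by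
      calc |U i x ν - U i y ν| ≤ |U i x ν| + |U i y ν| := abs_sub _ _
        _ ≤ 2 * L := by linarith
    nlinarith
  have hmain := texp_lip q a hq ha0 hA hb1 hb2
  have hdiff : |η⁻¹ * (U i x μ - U i y μ) - η⁻¹ * (U i x ν - U i y ν)|
      ≤ η⁻¹ * (2 * L * S) := by
    have h3x := hU3 i x μ ν hμ hν
    have h3y := hU3 i y μ ν hμ hν
    have : η⁻¹ * (U i x μ - U i y μ) - η⁻¹ * (U i x ν - U i y ν)
        = η⁻¹ * ((U i x μ - U i x ν) - (U i y μ - U i y ν)) := by ring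
    rw [this, abs_mul, abs_of_pos hη']
    have habs : |(U i x μ - U i x ν) - (U i y μ - U i y ν)|
        ≤ L * S + L * S := by
      calc |(U i x μ - U i x ν) - (U i y μ - U i y ν)|
          ≤ |U i x μ - U i x ν| + |U i y μ - U i y ν| := abs_sub _ _
        _ ≤ L * S + L * S := add_le_add h3x h3y
    nlinarith
  have htnn : 0 ≤ texp q a ^ q := by
    rcases eq_or_ne q 1 with h | h
    · simp [texp, h]; positivity
    · have : 0 ≤ texp q a := by
        simp only [texp, if_neg h]
        exact Real.rpow_nonneg (le_max_right _ _) _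
      exact Real.rpow_nonneg this _
  calc |texp q (η⁻¹ * (U i x μ - U i y μ)) - texp q (η⁻¹ * (U i x ν - U i y ν))|
      ≤ texp q a ^ q * |η⁻¹ * (U i x μ - U i y μ) - η⁻¹ * (U i x ν - U i y ν)| := hmain
    _ ≤ texp q a ^ q * (η⁻¹ * (2 * L * S)) := mul_le_mul_of_nonneg_left hdiff htnn
    _ = 2 * η⁻¹ * L * texp q a ^ q * S := by ring


end
end

section
/- (Lemma 2) Under Assumptions 1 and 2, there exists a constant l > 0 such that for every i ∈ {1,…,I} and all {μ}, {ν} ∈ (M₂)^I, ‖𝔏_iμ − 𝔏_iν‖ ≤ l · Σ_{j=1}^I ‖μ_j − ν_j‖, where the norm on the left is the total variation norm of the signed measure 𝔏_iμ − 𝔏_iν. -/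
open MeasureTheory Real

noncomputable section

/-- Hölder continuous functions on `Ω` are continuous. -/
lemma cont_of_holder {f : Ω → ℝ} {C dd : ℝ} (hdd : 0 < dd)
    (h : ∀ x y : Ω, |f x - f y| ≤ C * |(x:ℝ) - (y:ℝ)| ^ dd) : Continuous f := by
  set C' := max C 1 with hC'
  have hC'pos : (0:ℝ) < C' := lt_of_lt_of_le one_pos (le_max_right _ _)
  have h' : ∀ x y : Ω, |f x - f y| ≤ C' * |(x:ℝ) - (y:ℝ)| ^ dd := fun x y =>
    (h x y).trans (mul_le_mul_of_nonneg_right (le_max_left _ _) (by positivity))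
  rw [Metric.continuous_iff]
  intro x ε hε
  refine ⟨(ε / C') ^ (1/dd), by positivity, fun y hy => ?_⟩
  have hdist : dist y x = |(y:ℝ) - (x:ℝ)| := by
    rw [Subtype.dist_eq, Real.dist_eq]
  have hlt : |(y:ℝ) - (x:ℝ)| ^ dd < ε / C' := by
    have h1 : |(y:ℝ) - (x:ℝ)| ^ dd < ((ε / C') ^ (1/dd)) ^ dd :=
      Real.rpow_lt_rpow (abs_nonneg _) (by rw [← hdist]; exact hy) hdd
    have h2 : ((ε / C') ^ (1/dd)) ^ dd = ε / C' := by
      rw [← Real.rpow_mul (by positivity), one_div, inv_mul_cancel₀ hdd.ne', Real.rpow_one]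
    linarith
  calc dist (f y) (f x) = |f y - f x| := Real.dist_eq _ _
    _ ≤ C' * |(y:ℝ) - (x:ℝ)| ^ dd := h' y x
    _ < C' * (ε / C') := by exact mul_lt_mul_of_pos_left hlt hC'pos
    _ = ε := by field_simp

lemma integrable_of_bound {f : Ω → ℝ} {C : ℝ} (hf : AEStronglyMeasurable f volume)
    (h : ∀ x, |f x| ≤ C) : Integrable f volume :=
  ⟨hf, HasFiniteIntegral.of_bounded (C := C)
    (Filter.Eventually.of_forall (by simpa [Real.norm_eq_abs] using h))⟩

lemma integral_le_of_le {f : Ω → ℝ} {C : ℝ} (hfi : Integrable f volume)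
    (h : ∀ x, f x ≤ C) : ∫ x, f x ≤ C := by
  have := integral_mono hfi (integrable_const C) h
  simpa using this

lemma le_integral_of_le {f : Ω → ℝ} {C : ℝ} (hfi : Integrable f volume)
    (h : ∀ x, C ≤ f x) : C ≤ ∫ x, f x := by
  have := integral_mono (integrable_const C) hfi h
  simpa using this

lemma abs_integral_sub_le {f g : Ω → ℝ} {C : ℝ} (hf : Integrable f volume)
    (hg : Integrable g volume) (h : ∀ x, |f x - g x| ≤ C) :
    |(∫ x, f x) - ∫ x, g x| ≤ C := by
  rw [← integral_sub hf hg]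
  calc |∫ x, (f x - g x)| ≤ ∫ x, |f x - g x| := by
        simpa [Real.norm_eq_abs] using norm_integral_le_integral_norm (fun x => f x - g x) (μ := volume)
    _ ≤ C := integral_le_of_le (hf.sub hg).abs h

/-- `x ↦ x ^ p` is Lipschitz on `[r₁, r₂]` when `r₁ > 0`. -/
lemma rpow_lipschitzOn {r₁ r₂ : ℝ} (p : ℝ) (h₁ : 0 < r₁) :
    ∃ K > 0, ∀ x y : ℝ, x ∈ Set.Icc r₁ r₂ → y ∈ Set.Icc r₁ r₂ →
      |x ^ p - y ^ p| ≤ K * |x - y| := by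
  set K := |p| * max (r₁ ^ (p-1)) (r₂ ^ (p-1)) + 1 with hKdef
  have hr1 : (0:ℝ) < r₁ ^ (p-1) := Real.rpow_pos_of_pos h₁ _
  have hK : 0 < K := by positivity
  refine ⟨K, hK, fun x y hx hy => ?_⟩
  have hderiv : ∀ t ∈ Set.Icc r₁ r₂,
      HasDerivWithinAt (fun u : ℝ => u ^ p) (p * t ^ (p-1)) (Set.Icc r₁ r₂) t :=
    fun t ht => (Real.hasDerivAt_rpow_const
      (Or.inl (ne_of_gt (lt_of_lt_of_le h₁ ht.1)))).hasDerivWithinAt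
  have hbound : ∀ t ∈ Set.Icc r₁ r₂, ‖p * t ^ (p-1)‖ ≤ K := by
    intro t ht
    have ht0 : 0 < t := lt_of_lt_of_le h₁ ht.1
    have h2 : t ^ (p-1) ≤ max (r₁ ^ (p-1)) (r₂ ^ (p-1)) := by
      rcases le_or_gt 0 (p-1) with hp | hp
      · exact le_max_of_le_right (Real.rpow_le_rpow ht0.le ht.2 hp)
      · exact le_max_of_le_left (Real.rpow_le_rpow_of_nonpos h₁ ht.1 hp.le)
    rw [Real.norm_eq_abs, abs_mul, abs_of_nonneg (Real.rpow_nonneg ht0.le _)]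
    have := mul_le_mul_of_nonneg_left h2 (abs_nonneg p)
    linarith
  have := (convex_Icc r₁ r₂).norm_image_sub_le_of_norm_hasDerivWithin_le hderiv hbound hy hx
  simpa [Real.norm_eq_abs] using this

/-- The total variation of `withDensityᵥ f` is at most `2 ∫ |f|`. -/
lemma tv_withDensityᵥ_le (f : Ω → ℝ) (hm : Measurable f) (hi : Integrable f volume) :
    tv ((volume : Measure Ω).withDensityᵥ f) ≤ 2 * ∫ x, |f x| := by
  have hjd := SignedMeasure.toJordanDecomposition_eq_of_eq_add_withDensity (t := 0)
    (s := (volume : Measure Ω).withDensityᵥ f) hm hi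
    (VectorMeasure.MutuallySingular.zero_left) (by rw [zero_add])
  have habs : 0 ≤ᵐ[volume (α := Ω)] fun x => |f x| :=
    Filter.Eventually.of_forall fun x => abs_nonneg _
  have hint0 : 0 ≤ ∫ x : Ω, |f x| := integral_nonneg fun x => abs_nonneg _
  have hlint : ∀ (g : Ω → ℝ), (∀ x, g x ≤ |f x|) →
      (∫⁻ x, ENNReal.ofReal (g x)) ≤ ENNReal.ofReal (∫ x, |f x|) := by
    intro g hg
    rw [ofReal_integral_eq_lintegral_ofReal hi.abs habs]
    exact lintegral_mono fun x => ENNReal.ofReal_le_ofReal (hg x)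
  have h1 : tv ((volume : Measure Ω).withDensityᵥ f)
      = ((∫⁻ x, ENNReal.ofReal (f x)) + ∫⁻ x, ENNReal.ofReal (-f x)).toReal := by
    rw [tv]
    unfold SignedMeasure.totalVariation
    rw [hjd]
    simp [SignedMeasure.toJordanDecomposition_zero, JordanDecomposition.zero_posPart,
      JordanDecomposition.zero_negPart, Measure.add_apply,
      withDensity_apply _ MeasurableSet.univ, setLIntegral_univ]
  rw [h1]
  have h2 : (∫⁻ x, ENNReal.ofReal (f x)) + (∫⁻ x, ENNReal.ofReal (-f x))
      ≤ ENNReal.ofReal (2 * ∫ x, |f x|) := by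
    have ha := hlint (fun x => f x) (fun x => le_abs_self _)
    have hb := hlint (fun x => -f x) (fun x => by rw [← abs_neg]; exact le_abs_self _)
    calc (∫⁻ x, ENNReal.ofReal (f x)) + (∫⁻ x, ENNReal.ofReal (-f x))
        ≤ ENNReal.ofReal (∫ x, |f x|) + ENNReal.ofReal (∫ x, |f x|) := add_le_add ha hb
      _ = ENNReal.ofReal (2 * ∫ x, |f x|) := by
          rw [← ENNReal.ofReal_add hint0 hint0]; ring_nf
  exact ENNReal.toReal_le_of_le_ofReal (by linarith) h2

lemma texp_props (q η L : ℝ) (hq : 0 < q) (hη : 0 < η) (hL : 0 < L)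
    (hA2 : q ≠ 1 → ∃ g > 0, 1 - 2 * |1 - q| * η⁻¹ * L ≥ g) :
    ∃ m M K : ℝ, 0 < m ∧ 0 < M ∧ 0 < K ∧
      (∀ a : ℝ, |a| ≤ 2 * L / η → texp q a ∈ Set.Icc m M) ∧
      (∀ a b : ℝ, |a| ≤ 2 * L / η → |b| ≤ 2 * L / η →
        |texp q a - texp q b| ≤ K * |a - b|) := by
  set B := 2 * L / η with hBdef
  have hB : 0 < B := by positivity
  by_cases hq1 : q = 1
  · subst hq1
    have htexp : ∀ a : ℝ, texp 1 a = Real.exp a := fun a => by rw [texp, if_pos rfl]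
    refine ⟨Real.exp (-B), Real.exp B, Real.exp B, Real.exp_pos _, Real.exp_pos _,
      Real.exp_pos _, fun a ha => ?_, fun a b ha hb => ?_⟩
    · rw [htexp]
      obtain ⟨h1, h2⟩ := abs_le.mp ha
      exact ⟨Real.exp_le_exp.mpr h1, Real.exp_le_exp.mpr h2⟩
    · rw [htexp, htexp]
      have hderiv : ∀ t ∈ Set.Icc (-B) B,
          HasDerivWithinAt Real.exp (Real.exp t) (Set.Icc (-B) B) t :=
        fun t _ => (Real.hasDerivAt_exp t).hasDerivWithinAt
      have hbound : ∀ t ∈ Set.Icc (-B) B, ‖Real.exp t‖ ≤ Real.exp B := fun t ht => by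
        rw [Real.norm_eq_abs, abs_of_pos (Real.exp_pos t)]
        exact Real.exp_le_exp.mpr ht.2
      have := (convex_Icc (-B) B).norm_image_sub_le_of_norm_hasDerivWithin_le hderiv hbound
        (abs_le.mp hb) (abs_le.mp ha)
      simpa [Real.norm_eq_abs] using this
  · obtain ⟨g, hg0, hgle⟩ := hA2 hq1
    have h1q : (1:ℝ) - q ≠ 0 := sub_ne_zero.mpr (Ne.symm hq1)
    set p := (1:ℝ) / (1 - q) with hpdef
    have hg1 : g ≤ 1 := by
      have : 0 ≤ 2 * |1 - q| * η⁻¹ * L := by positivity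
      linarith
    have h2g : (0:ℝ) < 2 - g := by linarith
    have key : ∀ a : ℝ, |a| ≤ B → g ≤ 1 + (1 - q) * a ∧ 1 + (1 - q) * a ≤ 2 - g := by
      intro a ha
      have h2 : |(1 - q) * a| ≤ 1 - g := by
        rw [abs_mul]
        calc |1 - q| * |a| ≤ |1 - q| * B := mul_le_mul_of_nonneg_left ha (abs_nonneg _)
          _ = 2 * |1 - q| * η⁻¹ * L := by rw [hBdef]; field_simp
          _ ≤ 1 - g := by linarith
      obtain ⟨ha1, ha2⟩ := abs_le.mp h2
      exact ⟨by linarith, by linarith⟩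
    have htexp : ∀ a : ℝ, |a| ≤ B → texp q a = (1 + (1 - q) * a) ^ p := by
      intro a ha
      have := (key a ha).1
      rw [texp, if_neg hq1, max_eq_left (by linarith)]
    set m := min (g ^ p) ((2 - g) ^ p) with hmdef
    set M := max (g ^ p) ((2 - g) ^ p) with hMdef
    have hm : 0 < m := lt_min (Real.rpow_pos_of_pos hg0 _) (Real.rpow_pos_of_pos h2g _)
    have hM : 0 < M := lt_of_lt_of_le hm (min_le_max)
    set K := max (g ^ (p - 1)) ((2 - g) ^ (p - 1)) + 1 with hKdef
    have hK : 0 < K := by positivity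
    refine ⟨m, M, K, hm, hM, hK, fun a ha => ?_, fun a b ha hb => ?_⟩
    · rw [htexp a ha]
      obtain ⟨hk1, hk2⟩ := key a ha
      have ht0 : 0 < 1 + (1 - q) * a := lt_of_lt_of_le hg0 hk1
      rcases le_or_gt 0 p with hp | hp
      · exact ⟨le_trans (min_le_left _ _) (Real.rpow_le_rpow hg0.le hk1 hp),
          le_trans (Real.rpow_le_rpow ht0.le hk2 hp) (le_max_right _ _)⟩
      · exact ⟨le_trans (min_le_right _ _) (Real.rpow_le_rpow_of_nonpos ht0 hk2 hp.le),
          le_trans (Real.rpow_le_rpow_of_nonpos hg0 hk1 hp.le) (le_max_left _ _)⟩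
    · have hderiv : ∀ t ∈ Set.Icc (-B) B,
          HasDerivWithinAt (texp q) ((1 + (1 - q) * t) ^ (p - 1)) (Set.Icc (-B) B) t := by
        intro t ht
        have htB : |t| ≤ B := abs_le.mpr ht
        have ht0 : 0 < 1 + (1 - q) * t := lt_of_lt_of_le hg0 (key t htB).1
        have h1 : HasDerivAt (fun x : ℝ => 1 + (1 - q) * x) (1 - q) t := by
          simpa using ((hasDerivAt_id t).const_mul (1 - q)).const_add 1
        have h2 := (Real.hasDerivAt_rpow_const (p := p) (Or.inl ht0.ne')).comp t h1
        have heq : p * (1 + (1 - q) * t) ^ (p - 1) * (1 - q) = (1 + (1 - q) * t) ^ (p - 1) := by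
          rw [hpdef]; field_simp
        rw [heq] at h2
        exact h2.hasDerivWithinAt.congr
          (fun y hy => htexp y (abs_le.mpr hy)) (htexp t htB)
      have hbound : ∀ t ∈ Set.Icc (-B) B, ‖(1 + (1 - q) * t) ^ (p - 1)‖ ≤ K := by
        intro t ht
        have htB : |t| ≤ B := abs_le.mpr ht
        obtain ⟨hk1, hk2⟩ := key t htB
        have ht0 : 0 < 1 + (1 - q) * t := lt_of_lt_of_le hg0 hk1
        rw [Real.norm_eq_abs, abs_of_nonneg (Real.rpow_nonneg ht0.le _)]
        have h2 : (1 + (1 - q) * t) ^ (p - 1) ≤ max (g ^ (p - 1)) ((2 - g) ^ (p - 1)) := by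
          rcases le_or_gt 0 (p - 1) with hp | hp
          · exact le_max_of_le_right (Real.rpow_le_rpow ht0.le hk2 hp)
          · exact le_max_of_le_left (Real.rpow_le_rpow_of_nonpos hg0 hk1 hp.le)
        rw [hKdef]; linarith
      have := (convex_Icc (-B) B).norm_image_sub_le_of_norm_hasDerivWithin_le hderiv hbound
        (abs_le.mp hb) (abs_le.mp ha)
      simpa [Real.norm_eq_abs] using this

noncomputable def Efun (I : ℕ) (q η : ℝ) (U : Fin I → Ω → (Fin I → SignedMeasure Ω) → ℝ)
    (i : Fin I) (ρ : Fin I → SignedMeasure Ω) (y w : Ω) : ℝ :=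
  texp q (η⁻¹ * (U i y ρ - U i w ρ))

noncomputable def Dfun (I : ℕ) (q η : ℝ) (U : Fin I → Ω → (Fin I → SignedMeasure Ω) → ℝ)
    (i : Fin I) (ρ : Fin I → SignedMeasure Ω) (w : Ω) : ℝ :=
  ∫ z : Ω, Efun I q η U i ρ z w

noncomputable def Rfun (I : ℕ) (q η : ℝ) (U : Fin I → Ω → (Fin I → SignedMeasure Ω) → ℝ)
    (i : Fin I) (ρ : Fin I → SignedMeasure Ω) (y w : Ω) : ℝ :=
  Efun I q η U i ρ y w / Dfun I q η U i ρ w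

noncomputable def Gfun (I : ℕ) (q η : ℝ) (U : Fin I → Ω → (Fin I → SignedMeasure Ω) → ℝ)
    (i : Fin I) (ρ : Fin I → SignedMeasure Ω) (y : Ω) : ℝ :=
  ∫ w : Ω, (Rfun I q η U i ρ y w) ^ q


/-- Lemma 2: under Assumptions 1 and 2, there exists a constant `l > 0`
such that for every `i` and all `{μ}, {ν} ∈ (M₂)^I`,
`‖𝔏_i μ − 𝔏_i ν‖ ≤ l Σ_j ‖μ_j − ν_j‖` (total variation norms). -/
theorem logit_lipschitz (I : ℕ) (q η L d : ℝ)
    (U : Fin I → Ω → (Fin I → SignedMeasure Ω) → ℝ)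
    (hq : 0 < q) (hη : 0 < η) (hL : 0 < L) (hd : d ∈ Set.Ioc (0:ℝ) 1)
    (hU1 : ∀ (i : Fin I) (x : Ω) (μ : Fin I → SignedMeasure Ω),
      (∀ j, tv (μ j) ≤ 2) → |U i x μ| ≤ L)
    (hU2 : ∀ (i : Fin I) (x y : Ω) (μ : Fin I → SignedMeasure Ω),
      (∀ j, tv (μ j) ≤ 2) → |U i x μ - U i y μ| ≤ L * |(x : ℝ) - (y : ℝ)| ^ d)
    (hU3 : ∀ (i : Fin I) (x : Ω) (μ ν : Fin I → SignedMeasure Ω),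
      (∀ j, tv (μ j) ≤ 2) → (∀ j, tv (ν j) ≤ 2) →
      |U i x μ - U i x ν| ≤ L * ∑ j, tv (μ j - ν j))
    (hA2 : q ≠ 1 → ∃ g > 0, 1 - 2 * |1 - q| * η⁻¹ * L ≥ g) :
    ∃ l > 0, ∀ (i : Fin I) (μ ν : Fin I → SignedMeasure Ω),
      (∀ j, tv (μ j) ≤ 2) → (∀ j, tv (ν j) ≤ 2) →
      tv (Logit I q η U i μ - Logit I q η U i ν) ≤ l * ∑ j, tv (μ j - ν j) := by
  obtain ⟨hd0, hd1⟩ := hd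
  obtain ⟨m, M, K, hm, hM, hK, hbound, hlip⟩ := texp_props q η L hq hη hL hA2
  have hmM : m ≤ M := by
    have h0 := hbound 0 (by rw [abs_zero]; positivity)
    exact le_trans h0.1 h0.2
  obtain ⟨K₂, hK₂, hrlip⟩ := rpow_lipschitzOn (r₁ := m / M) (r₂ := M / m) q (by positivity)
  set C₂ : ℝ := K * (2 * η⁻¹ * L) * (1 / m + M / (m * m)) with hC₂def
  have hC₂ : 0 < C₂ := by positivity
  refine ⟨2 * (K₂ * C₂), by positivity, fun i μ ν hμ hν => ?_⟩
  set S := ∑ j, tv (μ j - ν j) with hSdef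
  have hS0 : 0 ≤ S := Finset.sum_nonneg fun j _ => ENNReal.toReal_nonneg
  -- bound on the argument of texp
  have habsη : ∀ a b : ℝ, |η⁻¹ * a - η⁻¹ * b| = η⁻¹ * |a - b| := by
    intro a b
    rw [← mul_sub, abs_mul, abs_of_nonneg (inv_nonneg.mpr hη.le)]
  have hA : ∀ (ρ : Fin I → SignedMeasure Ω), (∀ j, tv (ρ j) ≤ 2) → ∀ y w : Ω,
      |η⁻¹ * (U i y ρ - U i w ρ)| ≤ 2 * L / η := by
    intro ρ hρ y w
    obtain ⟨h1a, h1b⟩ := abs_le.mp (hU1 i y ρ hρ)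
    obtain ⟨h2a, h2b⟩ := abs_le.mp (hU1 i w ρ hρ)
    rw [abs_mul, abs_of_nonneg (inv_nonneg.mpr hη.le)]
    have h3 : |U i y ρ - U i w ρ| ≤ 2 * L := abs_le.mpr ⟨by linarith, by linarith⟩
    calc η⁻¹ * |U i y ρ - U i w ρ| ≤ η⁻¹ * (2 * L) :=
          mul_le_mul_of_nonneg_left h3 (inv_nonneg.mpr hη.le)
      _ = 2 * L / η := by ring
  -- bounds on E
  have hEmem : ∀ ρ, (∀ j, tv (ρ j) ≤ 2) → ∀ y w : Ω,
      m ≤ Efun I q η U i ρ y w ∧ Efun I q η U i ρ y w ≤ M := fun ρ hρ y w =>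
    ⟨(hbound _ (hA ρ hρ y w)).1, (hbound _ (hA ρ hρ y w)).2⟩
  have hEabs : ∀ ρ, (∀ j, tv (ρ j) ≤ 2) → ∀ y w : Ω, |Efun I q η U i ρ y w| ≤ M := by
    intro ρ hρ y w
    obtain ⟨h1, h2⟩ := hEmem ρ hρ y w
    exact abs_le.mpr ⟨by linarith, h2⟩
  -- Lipschitz in the argument of texp, specialized
  have hElip : ∀ ρ, (∀ j, tv (ρ j) ≤ 2) → ∀ (y w y' w' : Ω),
      |Efun I q η U i ρ y w - Efun I q η U i ρ y' w'| ≤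
        K * |η⁻¹ * (U i y ρ - U i w ρ) - η⁻¹ * (U i y' ρ - U i w' ρ)| :=
    fun ρ hρ y w y' w' => hlip _ _ (hA ρ hρ y w) (hA ρ hρ y' w')
  -- continuity of E in each variable
  have hEcontz : ∀ ρ, (∀ j, tv (ρ j) ≤ 2) → ∀ w : Ω,
      Continuous (fun z => Efun I q η U i ρ z w) := by
    intro ρ hρ w
    refine cont_of_holder (C := K * (η⁻¹ * L)) hd0 (fun x y => ?_)
    have h1 := hElip ρ hρ x w y w
    have h2 : |η⁻¹ * (U i x ρ - U i w ρ) - η⁻¹ * (U i y ρ - U i w ρ)|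
        = η⁻¹ * |U i x ρ - U i y ρ| := by
      rw [habsη, sub_sub_sub_cancel_right]
    have h3 := hU2 i x y ρ hρ
    have h4 : η⁻¹ * |U i x ρ - U i y ρ| ≤ η⁻¹ * (L * |(x:ℝ) - (y:ℝ)| ^ d) :=
      mul_le_mul_of_nonneg_left h3 (inv_nonneg.mpr hη.le)
    calc |Efun I q η U i ρ x w - Efun I q η U i ρ y w|
        ≤ K * (η⁻¹ * |U i x ρ - U i y ρ|) := by rw [← h2]; exact h1
      _ ≤ K * (η⁻¹ * (L * |(x:ℝ) - (y:ℝ)| ^ d)) := mul_le_mul_of_nonneg_left h4 hK.le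
      _ = K * (η⁻¹ * L) * |(x:ℝ) - (y:ℝ)| ^ d := by ring
  have hEcontw : ∀ ρ, (∀ j, tv (ρ j) ≤ 2) → ∀ y : Ω,
      Continuous (fun w => Efun I q η U i ρ y w) := by
    intro ρ hρ y
    refine cont_of_holder (C := K * (η⁻¹ * L)) hd0 (fun x w => ?_)
    have h1 := hElip ρ hρ y x y w
    have h2 : |η⁻¹ * (U i y ρ - U i x ρ) - η⁻¹ * (U i y ρ - U i w ρ)|
        = η⁻¹ * |U i w ρ - U i x ρ| := by
      rw [habsη, sub_sub_sub_cancel_left]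
    have h3 := hU2 i w x ρ hρ
    have h4 : η⁻¹ * |U i w ρ - U i x ρ| ≤ η⁻¹ * (L * |(w:ℝ) - (x:ℝ)| ^ d) :=
      mul_le_mul_of_nonneg_left h3 (inv_nonneg.mpr hη.le)
    calc |Efun I q η U i ρ y x - Efun I q η U i ρ y w|
        ≤ K * (η⁻¹ * |U i w ρ - U i x ρ|) := by rw [← h2]; exact h1
      _ ≤ K * (η⁻¹ * (L * |(w:ℝ) - (x:ℝ)| ^ d)) := mul_le_mul_of_nonneg_left h4 hK.le
      _ = K * (η⁻¹ * L) * |(x:ℝ) - (w:ℝ)| ^ d := by rw [abs_sub_comm]; ring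
  have hEintz : ∀ ρ, (∀ j, tv (ρ j) ≤ 2) → ∀ w : Ω,
      Integrable (fun z => Efun I q η U i ρ z w) volume := fun ρ hρ w =>
    integrable_of_bound (hEcontz ρ hρ w).aestronglyMeasurable (fun z => hEabs ρ hρ z w)
  -- bounds on D
  have hDmem : ∀ ρ, (∀ j, tv (ρ j) ≤ 2) → ∀ w : Ω,
      m ≤ Dfun I q η U i ρ w ∧ Dfun I q η U i ρ w ≤ M := by
    intro ρ hρ w
    constructor
    · exact le_integral_of_le (hEintz ρ hρ w) (fun z => (hEmem ρ hρ z w).1)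
    · exact integral_le_of_le (hEintz ρ hρ w) (fun z => (hEmem ρ hρ z w).2)
  have hDpos : ∀ ρ, (∀ j, tv (ρ j) ≤ 2) → ∀ w : Ω, 0 < Dfun I q η U i ρ w :=
    fun ρ hρ w => lt_of_lt_of_le hm (hDmem ρ hρ w).1
  -- continuity of D
  have hDcont : ∀ ρ, (∀ j, tv (ρ j) ≤ 2) → Continuous (Dfun I q η U i ρ) := by
    intro ρ hρ
    refine cont_of_holder (C := K * (η⁻¹ * L)) hd0 (fun x w => ?_)
    refine abs_integral_sub_le (hEintz ρ hρ x) (hEintz ρ hρ w) (fun z => ?_)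
    have h1 := hElip ρ hρ z x z w
    have h2 : |η⁻¹ * (U i z ρ - U i x ρ) - η⁻¹ * (U i z ρ - U i w ρ)|
        = η⁻¹ * |U i w ρ - U i x ρ| := by
      rw [habsη, sub_sub_sub_cancel_left]
    have h3 := hU2 i w x ρ hρ
    have h4 : η⁻¹ * |U i w ρ - U i x ρ| ≤ η⁻¹ * (L * |(w:ℝ) - (x:ℝ)| ^ d) :=
      mul_le_mul_of_nonneg_left h3 (inv_nonneg.mpr hη.le)
    calc |Efun I q η U i ρ z x - Efun I q η U i ρ z w|
        ≤ K * (η⁻¹ * |U i w ρ - U i x ρ|) := by rw [← h2]; exact h1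
      _ ≤ K * (η⁻¹ * (L * |(w:ℝ) - (x:ℝ)| ^ d)) := mul_le_mul_of_nonneg_left h4 hK.le
      _ = K * (η⁻¹ * L) * |(x:ℝ) - (w:ℝ)| ^ d := by rw [abs_sub_comm]; ring
  -- bounds on R
  have hRmem : ∀ ρ, (∀ j, tv (ρ j) ≤ 2) → ∀ y w : Ω,
      m / M ≤ Rfun I q η U i ρ y w ∧ Rfun I q η U i ρ y w ≤ M / m := by
    intro ρ hρ y w
    obtain ⟨hE1, hE2⟩ := hEmem ρ hρ y w
    obtain ⟨hD1, hD2⟩ := hDmem ρ hρ w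
    have hDp := hDpos ρ hρ w
    rw [Rfun]
    constructor
    · rw [div_le_div_iff₀ hM hDp]
      nlinarith
    · rw [div_le_div_iff₀ hDp hm]
      nlinarith
  -- continuity and integrability of w ↦ R^q
  have hRcontw : ∀ ρ, (∀ j, tv (ρ j) ≤ 2) → ∀ y : Ω,
      Continuous (fun w => Rfun I q η U i ρ y w) := by
    intro ρ hρ y
    exact (hEcontw ρ hρ y).div (hDcont ρ hρ) (fun w => (hDpos ρ hρ w).ne')
  have hRqabs : ∀ ρ, (∀ j, tv (ρ j) ≤ 2) → ∀ y w : Ω,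
      |Rfun I q η U i ρ y w ^ q| ≤ (M / m) ^ q := by
    intro ρ hρ y w
    obtain ⟨hR1, hR2⟩ := hRmem ρ hρ y w
    have hR0 : 0 ≤ Rfun I q η U i ρ y w := le_trans (by positivity) hR1
    rw [abs_of_nonneg (Real.rpow_nonneg hR0 q)]
    exact Real.rpow_le_rpow hR0 hR2 hq.le
  have hRqint : ∀ ρ, (∀ j, tv (ρ j) ≤ 2) → ∀ y : Ω,
      Integrable (fun w => Rfun I q η U i ρ y w ^ q) volume := by
    intro ρ hρ y
    exact integrable_of_bound
      (((hRcontw ρ hρ y).rpow_const (fun w => Or.inr hq.le)).aestronglyMeasurable)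
      (fun w => hRqabs ρ hρ y w)
  -- differences between μ and ν
  have hEdiff : ∀ y w : Ω, |Efun I q η U i μ y w - Efun I q η U i ν y w|
      ≤ K * (η⁻¹ * (2 * L * S)) := by
    intro y w
    have h1 := hlip _ _ (hA μ hμ y w) (hA ν hν y w)
    have h2 : |η⁻¹ * (U i y μ - U i w μ) - η⁻¹ * (U i y ν - U i w ν)|
        ≤ η⁻¹ * (2 * L * S) := by
      have h3 := hU3 i y μ ν hμ hν
      have h4 := hU3 i w μ ν hμ hν
      rw [← hSdef] at h3 h4
      have h5 : η⁻¹ * (U i y μ - U i w μ) - η⁻¹ * (U i y ν - U i w ν)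
          = η⁻¹ * ((U i y μ - U i y ν) - (U i w μ - U i w ν)) := by ring
      rw [h5, abs_mul, abs_of_nonneg (inv_nonneg.mpr hη.le)]
      have h6 : |(U i y μ - U i y ν) - (U i w μ - U i w ν)| ≤ 2 * L * S := by
        obtain ⟨h3a, h3b⟩ := abs_le.mp h3
        obtain ⟨h4a, h4b⟩ := abs_le.mp h4
        exact abs_le.mpr ⟨by linarith, by linarith⟩
      exact mul_le_mul_of_nonneg_left h6 (inv_nonneg.mpr hη.le)
    exact h1.trans (mul_le_mul_of_nonneg_left h2 hK.le)
  have hDdiff : ∀ w : Ω, |Dfun I q η U i μ w - Dfun I q η U i ν w|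
      ≤ K * (η⁻¹ * (2 * L * S)) := fun w =>
    abs_integral_sub_le (hEintz μ hμ w) (hEintz ν hν w) (fun z => hEdiff z w)
  have hRdiff : ∀ y w : Ω, |Rfun I q η U i μ y w - Rfun I q η U i ν y w| ≤ C₂ * S := by
    intro y w
    set Δ := K * (η⁻¹ * (2 * L * S)) with hΔdef
    have hΔ0 : 0 ≤ Δ := by positivity
    have hDμ := hDmem μ hμ w
    have hDν := hDmem ν hν w
    have hDμp := hDpos μ hμ w
    have hDνp := hDpos ν hν w
    have hsplit : Rfun I q η U i μ y w - Rfun I q η U i ν y w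
        = (Efun I q η U i μ y w - Efun I q η U i ν y w) / Dfun I q η U i μ w
          + Efun I q η U i ν y w * (Dfun I q η U i ν w - Dfun I q η U i μ w)
            / (Dfun I q η U i μ w * Dfun I q η U i ν w) := by
      rw [Rfun, Rfun]
      field_simp
      ring
    have hterm1 : |(Efun I q η U i μ y w - Efun I q η U i ν y w) / Dfun I q η U i μ w|
        ≤ Δ / m := by
      rw [abs_div, abs_of_pos hDμp]
      exact div_le_div₀ hΔ0 (hEdiff y w) hm hDμ.1
    have hterm2 : |Efun I q η U i ν y w * (Dfun I q η U i ν w - Dfun I q η U i μ w)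
          / (Dfun I q η U i μ w * Dfun I q η U i ν w)| ≤ M * Δ / (m * m) := by
      rw [abs_div, abs_mul, abs_of_pos (mul_pos hDμp hDνp)]
      refine div_le_div₀ (by positivity) ?_ (by positivity) ?_
      · refine mul_le_mul (hEabs ν hν y w) ?_ (abs_nonneg _) hM.le
        rw [abs_sub_comm]
        exact hDdiff w
      · exact mul_le_mul hDμ.1 hDν.1 hm.le (le_trans hm.le hDμ.1)
    have hsum : |Rfun I q η U i μ y w - Rfun I q η U i ν y w| ≤ Δ / m + M * Δ / (m * m) := by
      rw [hsplit]
      exact (abs_add_le _ _).trans (add_le_add hterm1 hterm2)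
    have heq : Δ / m + M * Δ / (m * m) = C₂ * S := by
      rw [hΔdef, hC₂def]
      field_simp
    linarith
  have hRqdiff : ∀ y w : Ω, |Rfun I q η U i μ y w ^ q - Rfun I q η U i ν y w ^ q|
      ≤ K₂ * (C₂ * S) := by
    intro y w
    have h1 := hrlip _ _ ⟨(hRmem μ hμ y w).1, (hRmem μ hμ y w).2⟩
      ⟨(hRmem ν hν y w).1, (hRmem ν hν y w).2⟩
    exact h1.trans (mul_le_mul_of_nonneg_left (hRdiff y w) hK₂.le)
  have hGdiff : ∀ y : Ω, |Gfun I q η U i μ y - Gfun I q η U i ν y| ≤ K₂ * (C₂ * S) :=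
    fun y => abs_integral_sub_le (hRqint μ hμ y) (hRqint ν hν y) (fun w => hRqdiff y w)
  -- continuity, measurability and integrability of G
  have hGcont : ∀ ρ, (∀ j, tv (ρ j) ≤ 2) → Continuous (Gfun I q η U i ρ) := by
    intro ρ hρ
    refine cont_of_holder (C := K₂ * (K * (η⁻¹ * L) / m)) hd0 (fun x y => ?_)
    refine abs_integral_sub_le (hRqint ρ hρ x) (hRqint ρ hρ y) (fun w => ?_)
    have h1 := hrlip _ _ ⟨(hRmem ρ hρ x w).1, (hRmem ρ hρ x w).2⟩
      ⟨(hRmem ρ hρ y w).1, (hRmem ρ hρ y w).2⟩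
    have h2 : |Rfun I q η U i ρ x w - Rfun I q η U i ρ y w|
        ≤ K * (η⁻¹ * L) * |(x:ℝ) - (y:ℝ)| ^ d / m := by
      have hDp := hDpos ρ hρ w
      have hsplit : Rfun I q η U i ρ x w - Rfun I q η U i ρ y w
          = (Efun I q η U i ρ x w - Efun I q η U i ρ y w) / Dfun I q η U i ρ w := by
        rw [Rfun, Rfun, div_sub_div_same]
      rw [hsplit, abs_div, abs_of_pos hDp]
      have hnum : |Efun I q η U i ρ x w - Efun I q η U i ρ y w|
          ≤ K * (η⁻¹ * L) * |(x:ℝ) - (y:ℝ)| ^ d := by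
        have ha := hElip ρ hρ x w y w
        have hb : |η⁻¹ * (U i x ρ - U i w ρ) - η⁻¹ * (U i y ρ - U i w ρ)|
            = η⁻¹ * |U i x ρ - U i y ρ| := by
          rw [habsη, sub_sub_sub_cancel_right]
        have hc := hU2 i x y ρ hρ
        calc |Efun I q η U i ρ x w - Efun I q η U i ρ y w|
            ≤ K * (η⁻¹ * |U i x ρ - U i y ρ|) := by rw [← hb]; exact ha
          _ ≤ K * (η⁻¹ * (L * |(x:ℝ) - (y:ℝ)| ^ d)) :=
              mul_le_mul_of_nonneg_left
                (mul_le_mul_of_nonneg_left hc (inv_nonneg.mpr hη.le)) hK.le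
          _ = K * (η⁻¹ * L) * |(x:ℝ) - (y:ℝ)| ^ d := by ring
      exact div_le_div₀ (by positivity) hnum hm (hDmem ρ hρ w).1
    calc |Rfun I q η U i ρ x w ^ q - Rfun I q η U i ρ y w ^ q|
        ≤ K₂ * |Rfun I q η U i ρ x w - Rfun I q η U i ρ y w| := h1
      _ ≤ K₂ * (K * (η⁻¹ * L) * |(x:ℝ) - (y:ℝ)| ^ d / m) :=
          mul_le_mul_of_nonneg_left h2 hK₂.le
      _ = K₂ * (K * (η⁻¹ * L) / m) * |(x:ℝ) - (y:ℝ)| ^ d := by ring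
  have hGabs : ∀ ρ, (∀ j, tv (ρ j) ≤ 2) → ∀ y : Ω, |Gfun I q η U i ρ y| ≤ (M / m) ^ q := by
    intro ρ hρ y
    have h1 : Gfun I q η U i ρ y ≤ (M / m) ^ q := by
      rw [Gfun]
      refine integral_le_of_le (hRqint ρ hρ y) (fun w => ?_)
      exact le_trans (le_abs_self _) (hRqabs ρ hρ y w)
    have h2 : 0 ≤ Gfun I q η U i ρ y := by
      rw [Gfun]
      exact integral_nonneg fun w => Real.rpow_nonneg
        (le_trans (by positivity) (hRmem ρ hρ y w).1) q
    have h3 : (0:ℝ) ≤ (M / m) ^ q := Real.rpow_nonneg (by positivity) q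
    exact abs_le.mpr ⟨by linarith, h1⟩
  have hGint : ∀ ρ, (∀ j, tv (ρ j) ≤ 2) → Integrable (Gfun I q η U i ρ) volume :=
    fun ρ hρ => integrable_of_bound (hGcont ρ hρ).aestronglyMeasurable (hGabs ρ hρ)
  -- conclusion
  have hLogit : ∀ ρ, Logit I q η U i ρ = (volume : Measure Ω).withDensityᵥ (Gfun I q η U i ρ) :=
    fun ρ => rfl
  have hfinal : tv (Logit I q η U i μ - Logit I q η U i ν)
      ≤ 2 * ∫ y : Ω, |Gfun I q η U i μ y - Gfun I q η U i ν y| := by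
    have hsub : Logit I q η U i μ - Logit I q η U i ν
        = (volume : Measure Ω).withDensityᵥ
            (fun y => Gfun I q η U i μ y - Gfun I q η U i ν y) := by
      rw [hLogit μ, hLogit ν, ← withDensityᵥ_sub (hGint μ hμ) (hGint ν hν)]
      rfl
    rw [hsub]
    exact tv_withDensityᵥ_le _
      (((hGcont μ hμ).sub (hGcont ν hν)).measurable)
      ((hGint μ hμ).sub (hGint ν hν))
  have hintle : ∫ y : Ω, |Gfun I q η U i μ y - Gfun I q η U i ν y| ≤ K₂ * (C₂ * S) :=
    integral_le_of_le ((hGint μ hμ).sub (hGint ν hν)).abs hGdiff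
  calc tv (Logit I q η U i μ - Logit I q η U i ν)
      ≤ 2 * ∫ y : Ω, |Gfun I q η U i μ y - Gfun I q η U i ν y| := hfinal
    _ ≤ 2 * (K₂ * (C₂ * S)) := by linarith
    _ = 2 * (K₂ * C₂) * S := by ring

end
end

section
/- (Deformed Jensen inequality) Let q > 0, η > 0, n ∈ ℕ, let p_1,…,p_n ≥ 0 with Σ_{m=1}^n p_m = 1, and let a_1,…,a_n ∈ ℝ be such that, if q ≠ 1, 1 + (1-q)η^{-1}a_m > 0 for every m. Then η · ln_q( Σ_{m=1}^n p_m exp_q(η^{-1} a_m) ) ≥ Σ_{m=1}^n p_m a_m. -/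
open Real

noncomputable section

/-- Tsallis deformed logarithm `ln_q`. -/
noncomputable def tlog (q y : ℝ) : ℝ :=
  if q = 1 then Real.log y else (y ^ (1 - q) - 1) / (1 - q)

/-! For `q ≥ 0`, `exp_q` is convex on the region `1 + (1 - q) z > 0`, where `ln_q` inverts it,
and `ln_q` is increasing. So Jensen's inequality for `exp_q`, followed by `ln_q`, gives
`∑ p_m x_m = ln_q (exp_q (∑ p_m x_m)) ≤ ln_q (∑ p_m exp_q x_m)`; take `x_m = a_m / η`. -/

open Set

lemma convexOn_rpow_of_nonpos {p : ℝ} (hp : p ≤ 0) : ConvexOn ℝ (Ioi 0) fun x : ℝ ↦ x ^ p := by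
  refine MonotoneOn.convexOn_of_deriv (convex_Ioi 0)
    (fun x hx ↦ (continuousAt_rpow_const x p (Or.inl (ne_of_gt hx))).continuousWithinAt)
    (fun x hx ↦ (differentiableAt_rpow_const_of_ne p (ne_of_gt (interior_subset hx : 0 < x)))
      |>.differentiableWithinAt) ?_
  rw [interior_Ioi]
  intro x hx y _ hxy
  simp only [Real.deriv_rpow_const]
  exact mul_le_mul_of_nonpos_left (rpow_le_rpow_of_nonpos hx hxy (by linarith)) hp

lemma texp_eq_rpow {q z : ℝ} (hq : q ≠ 1) (hz : 0 < 1 + (1 - q) * z) :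
    texp q z = (1 + (1 - q) * z) ^ (1 / (1 - q)) := by
  rw [texp, if_neg hq, max_eq_left hz.le]

lemma texp_pos {q z : ℝ} (hz : 0 < 1 + (1 - q) * z) : 0 < texp q z := by
  by_cases hq : q = 1
  · simp only [texp, if_pos hq, exp_pos]
  · rw [texp_eq_rpow hq hz]
    exact rpow_pos_of_pos hz _

lemma tlog_texp {q z : ℝ} (hz : 0 < 1 + (1 - q) * z) : tlog q (texp q z) = z := by
  by_cases hq : q = 1
  · simp only [texp, tlog, if_pos hq, log_exp]
  · have hc : 1 - q ≠ 0 := sub_ne_zero.mpr (Ne.symm hq)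
    rw [texp_eq_rpow hq hz, tlog, if_neg hq, one_div, rpow_inv_rpow hz.le hc]
    field_simp
    ring

lemma tlog_le_tlog {q x y : ℝ} (hx : 0 < x) (hxy : x ≤ y) : tlog q x ≤ tlog q y := by
  unfold tlog
  split_ifs with hq
  · exact log_le_log hx hxy
  rcases lt_or_gt_of_ne (sub_ne_zero.mpr (Ne.symm hq)) with hc | hc
  · exact div_le_div_of_nonpos_of_le hc.le
      (by linarith [rpow_le_rpow_of_nonpos hx hxy hc.le])
  · exact div_le_div_of_nonneg_right
      (by linarith [rpow_le_rpow hx.le hxy hc.le]) hc.le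

lemma convexOn_texp {q : ℝ} (hq : 0 ≤ q) :
    ConvexOn ℝ {z : ℝ | 0 < 1 + (1 - q) * z} (texp q) := by
  by_cases hq1 : q = 1
  · subst hq1
    simp only [sub_self, zero_mul, add_zero, zero_lt_one, ofPred_true]
    exact convexOn_exp.congr fun z _ ↦ (if_pos rfl).symm
  have hc : 1 - q ≠ 0 := sub_ne_zero.mpr (Ne.symm hq1)
  have hpow : ConvexOn ℝ (Ioi 0) fun u : ℝ ↦ u ^ (1 / (1 - q)) := by
    rcases lt_or_gt_of_ne hc with hneg | hpos
    · exact convexOn_rpow_of_nonpos (one_div_neg.mpr hneg).le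
    · exact (convexOn_rpow ((one_le_div hpos).mpr (by linarith))).subset
        Ioi_subset_Ici_self (convex_Ioi 0)
  exact (hpow.comp_affineMap (AffineMap.const ℝ ℝ (1 : ℝ) + (1 - q) • AffineMap.id ℝ ℝ)).congr
    fun z hz ↦ (texp_eq_rpow hq1 hz).symm

lemma sum_mul_le_tlog_sum_mul_texp {ι : Type*} {s : Finset ι} {q : ℝ} (hq : 0 ≤ q)
    {w x : ι → ℝ} (hw : ∀ i ∈ s, 0 ≤ w i) (hws : ∑ i ∈ s, w i = 1)
    (hx : ∀ i ∈ s, 0 < 1 + (1 - q) * x i) :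
    ∑ i ∈ s, w i * x i ≤ tlog q (∑ i ∈ s, w i * texp q (x i)) := by
  have hmem : 0 < 1 + (1 - q) * ∑ i ∈ s, w i * x i := (convexOn_texp hq).1.sum_mem hw hws hx
  have hjensen : texp q (∑ i ∈ s, w i * x i) ≤ ∑ i ∈ s, w i * texp q (x i) := by
    simpa only [smul_eq_mul] using (convexOn_texp hq).map_sum_le hw hws hx
  calc ∑ i ∈ s, w i * x i = tlog q (texp q (∑ i ∈ s, w i * x i)) := (tlog_texp hmem).symm
    _ ≤ tlog q (∑ i ∈ s, w i * texp q (x i)) := tlog_le_tlog (texp_pos hmem) hjensen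

/-- Deformed Jensen inequality: let `q > 0`, `η > 0`, weights
`p_1, …, p_n ≥ 0` with `Σ p_m = 1`, and `a_1, …, a_n ∈ ℝ` such that, if `q ≠ 1`,
`1 + (1-q)η⁻¹ a_m > 0` for every `m`. Then
`η ln_q( Σ_m p_m exp_q(η⁻¹ a_m) ) ≥ Σ_m p_m a_m`. -/
theorem deformed_jensen (q η : ℝ) (hq : 0 < q) (hη : 0 < η) (n : ℕ)
    (p a : Fin n → ℝ) (hp : ∀ m, 0 ≤ p m) (hps : ∑ m, p m = 1)
    (ha : q ≠ 1 → ∀ m, 0 < 1 + (1 - q) * (η⁻¹ * a m)) :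
    ∑ m, p m * a m ≤ η * tlog q (∑ m, p m * texp q (η⁻¹ * a m)) := by
  have hdomain : ∀ m ∈ Finset.univ, 0 < 1 + (1 - q) * (η⁻¹ * a m) := fun m _ ↦ by
    by_cases hq1 : q = 1
    · simp [hq1]
    · exact ha hq1 m
  calc ∑ m, p m * a m = η * ∑ m, p m * (η⁻¹ * a m) := by
        rw [Finset.mul_sum]
        congr with m
        field_simp
    _ ≤ η * tlog q (∑ m, p m * texp q (η⁻¹ * a m)) :=
        mul_le_mul_of_nonneg_left
          (sum_mul_le_tlog_sum_mul_texp hq.le (fun m _ ↦ hp m) hps hdomain) hη.le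

end
end

section
/- (Bounds on the discretized optimal control) Fix q > 0, η > 0, L > 0, N_x ∈ ℕ, Δx = 1/N_x, and if q ≠ 1 assume there is 𝔤 > 0 with 1 − 2|1−q|η^{-1}L ≥ 𝔤. Let Φ_1,…,Φ_{N_x} be real numbers with 0 ≤ Φ_l ≤ L for all l. Then for all m, l ∈ {1,…,N_x}, the quantity φ*_{m,l} = exp_q(η^{-1}(Φ_m − Φ_l)) / ( Σ_{o=1}^{N_x} exp_q(η^{-1}(Φ_o − Φ_l)) Δx ) satisfies 0 ≤ φ*_{m,l} ≤ exp_q(2η^{-1}L) / exp_q(−2η^{-1}L). -/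
open Real

noncomputable section

/-- Bounds on the discretized optimal control: with `Δx = 1/N_x`,
Assumption 2, and values `0 ≤ Φ_l ≤ L`, the discretized control
`φ*_{m,l} = exp_q(η⁻¹(Φ_m − Φ_l)) / ( Σ_o exp_q(η⁻¹(Φ_o − Φ_l)) Δx )`
satisfies `0 ≤ φ*_{m,l} ≤ exp_q(2η⁻¹L)/exp_q(−2η⁻¹L)`. -/
theorem discrete_control_bounds (Nx : ℕ) (q η L Δx : ℝ)
    (hq : 0 < q) (hη : 0 < η) (hL : 0 < L)
    (hNx : 0 < Nx) (hΔx : Δx = 1 / (Nx : ℝ))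
    (hA2 : q ≠ 1 → ∃ g > 0, 1 - 2 * |1 - q| * η⁻¹ * L ≥ g)
    (Φ : Fin Nx → ℝ) (hΦ : ∀ l, 0 ≤ Φ l ∧ Φ l ≤ L) :
    ∀ m l : Fin Nx,
      0 ≤ texp q (η⁻¹ * (Φ m - Φ l)) / (∑ o, texp q (η⁻¹ * (Φ o - Φ l)) * Δx) ∧
      texp q (η⁻¹ * (Φ m - Φ l)) / (∑ o, texp q (η⁻¹ * (Φ o - Φ l)) * Δx) ≤
        texp q (2 * η⁻¹ * L) / texp q (-(2 * η⁻¹ * L)) := by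
  intro m l
  set c := 2 * η⁻¹ * L with hc
  have hc0 : 0 < c := by positivity
  have hbase : ∀ z : ℝ, |z| ≤ c → q ≠ 1 → 0 < 1 + (1 - q) * z := by
    intro z hz hq1
    obtain ⟨g, hg, hg2⟩ := hA2 hq1
    have h1 : |(1 - q) * z| ≤ |1 - q| * c := by
      rw [abs_mul]
      exact mul_le_mul_of_nonneg_left hz (abs_nonneg _)
    have h2 := neg_abs_le ((1 - q) * z)
    nlinarith [abs_nonneg (1 - q)]
  have htpos : ∀ z : ℝ, |z| ≤ c → 0 < texp q z := by
    intro z hz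
    unfold texp
    split
    · exact Real.exp_pos _
    · rename_i h
      have hb := hbase z hz h
      rw [max_eq_left hb.le]
      exact Real.rpow_pos_of_pos hb _
  have hmono : ∀ x y : ℝ, |x| ≤ c → |y| ≤ c → x ≤ y → texp q x ≤ texp q y := by
    intro x y hx hy hxy
    unfold texp
    split
    · exact Real.exp_le_exp.mpr hxy
    · rename_i h
      have hbx := hbase x hx h
      have hby := hbase y hy h
      rw [max_eq_left hbx.le, max_eq_left hby.le]
      rcases lt_or_gt_of_ne (sub_ne_zero.mpr (Ne.symm h) : (1:ℝ) - q ≠ 0) with h1 | h1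
      · have hbb : 1 + (1 - q) * y ≤ 1 + (1 - q) * x := by nlinarith
        exact Real.rpow_le_rpow_of_nonpos hby hbb
          (le_of_lt (div_neg_of_pos_of_neg one_pos h1))
      · exact Real.rpow_le_rpow hbx.le (by nlinarith) (le_of_lt (by positivity))
  have habs : ∀ o : Fin Nx, |η⁻¹ * (Φ o - Φ l)| ≤ c := by
    intro o
    rw [abs_mul, abs_of_pos (inv_pos.mpr hη)]
    have h1 : |Φ o - Φ l| ≤ L := by
      have := hΦ o; have := hΦ l
      rw [abs_sub_le_iff]; constructor <;> linarith
    have h2 : η⁻¹ * |Φ o - Φ l| ≤ η⁻¹ * L :=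
      mul_le_mul_of_nonneg_left h1 (inv_pos.mpr hη).le
    nlinarith [inv_pos.mpr hη, h2]
  have habsc : |(-c)| ≤ c := by rw [abs_neg, abs_of_pos hc0]
  have hΔ0 : 0 < Δx := by rw [hΔx]; positivity
  have hlow : ∀ o : Fin Nx, texp q (-c) ≤ texp q (η⁻¹ * (Φ o - Φ l)) := by
    intro o
    exact hmono _ _ habsc (habs o) (by have := abs_le.mp (habs o); linarith [this.1])
  have hden : texp q (-c) ≤ ∑ o, texp q (η⁻¹ * (Φ o - Φ l)) * Δx := by
    have hs : ∑ o : Fin Nx, texp q (-c) * Δx ≤ ∑ o, texp q (η⁻¹ * (Φ o - Φ l)) * Δx :=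
      Finset.sum_le_sum fun o _ => mul_le_mul_of_nonneg_right (hlow o) hΔ0.le
    calc texp q (-c) = ∑ _o : Fin Nx, texp q (-c) * Δx := by
          rw [Finset.sum_const, Finset.card_univ, Fintype.card_fin, nsmul_eq_mul, hΔx]
          field_simp
      _ ≤ _ := hs
  have hdpos : 0 < ∑ o, texp q (η⁻¹ * (Φ o - Φ l)) * Δx :=
    lt_of_lt_of_le (htpos _ habsc) hden
  refine ⟨div_nonneg (htpos _ (habs m)).le hdpos.le, ?_⟩
  have hup : texp q (η⁻¹ * (Φ m - Φ l)) ≤ texp q c := by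
    refine hmono _ _ (habs m) (by rw [abs_of_pos hc0]) ?_
    have := abs_le.mp (habs m); linarith [this.2]
  exact div_le_div₀ (le_trans (htpos _ (habs m)).le hup) hup (htpos _ habsc) hden

end
end
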